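/- Let U and V be nonempty open sets in ℝⁿ and let T : U → V be bijective such that all components of T belong to BC¹(U) and all components of T⁻¹ belong to BC¹(V) (T is 1-smooth). Then inf_U |det T′| > 0 and inf_V |det (T⁻¹)′| > 0. -/

import Mathlib

/-! By the chain rule, `det (T⁻¹)′(T x) · det T′(x) = 1`. A bound on `‖(T⁻¹)′‖` bounds
`|det (T⁻¹)′|` from above, since `det` is continuous and closed balls of operators on a
finite-dimensional space are compact; hence `|det T′|` is bounded away from `0`. The same
argument with the roles of `T` and `T⁻¹` exchanged gives the second bound. -/

section DetBounds

variable {𝕜 E : Type*} [NontriviallyNormedField 𝕜] [NormedAddCommGroup E] [NormedSpace 𝕜 E]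

theorem exists_pos_bound_norm_det [ProperSpace 𝕜] [FiniteDimensional 𝕜 E] (M : ℝ) :
    ∃ C, 0 < C ∧ ∀ A : E →L[𝕜] E, ‖A‖ ≤ M → ‖A.det‖ ≤ C := by
  have := FiniteDimensional.proper 𝕜 (E →L[𝕜] E)
  obtain ⟨C, hC⟩ := (isCompact_closedBall (0 : E →L[𝕜] E) M).exists_bound_of_continuousOn
    ContinuousLinearMap.continuous_det.continuousOn
  refine ⟨max C 1, by positivity, fun A hA => (hC A ?_).trans (le_max_left C 1)⟩
  rwa [mem_closedBall_zero_iff]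

theorem det_fderivWithin_mul_det_fderivWithin_of_leftInvOn {U V : Set E} {T S : E → E}
    (hU : IsOpen U) (hV : IsOpen V) (hTV : Set.MapsTo T U V) (hST : Set.LeftInvOn S T U)
    (hT : DifferentiableOn 𝕜 T U) (hS : DifferentiableOn 𝕜 S V) {x : E} (hx : x ∈ U) :
    (fderivWithin 𝕜 S V (T x)).det * (fderivWithin 𝕜 T U x).det = 1 := by
  have hdT := hT.differentiableAt (hU.mem_nhds hx)
  have hdS := hS.differentiableAt (hV.mem_nhds (hTV hx))
  have hcomp : (fderiv 𝕜 S (T x)).comp (fderiv 𝕜 T x) = ContinuousLinearMap.id 𝕜 E := by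
    rw [← fderiv_comp x hdS hdT, ← fderiv_id]
    exact Filter.EventuallyEq.fderiv_eq (Filter.eventually_of_mem (hU.mem_nhds hx) hST)
  rw [fderivWithin_of_isOpen hU hx, fderivWithin_of_isOpen hV (hTV hx), ContinuousLinearMap.det,
    ContinuousLinearMap.det, ← LinearMap.det_comp]
  simpa using congrArg (fun A : E →L[𝕜] E => LinearMap.det (A : E →ₗ[𝕜] E)) hcomp

theorem exists_pos_le_norm_det_fderivWithin_of_leftInvOn [ProperSpace 𝕜]
    [FiniteDimensional 𝕜 E] {U V : Set E} {T S : E → E}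
    (hU : IsOpen U) (hV : IsOpen V) (hTV : Set.MapsTo T U V) (hST : Set.LeftInvOn S T U)
    (hT : DifferentiableOn 𝕜 T U) (hS : DifferentiableOn 𝕜 S V)
    {M : ℝ} (hM : ∀ y ∈ V, ‖fderivWithin 𝕜 S V y‖ ≤ M) :
    ∃ c, 0 < c ∧ ∀ x ∈ U, c ≤ ‖(fderivWithin 𝕜 T U x).det‖ := by
  obtain ⟨C, hC, hdet⟩ := exists_pos_bound_norm_det (𝕜 := 𝕜) (E := E) M
  refine ⟨C⁻¹, inv_pos.mpr hC, fun x hx => ?_⟩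
  have hmul := det_fderivWithin_mul_det_fderivWithin_of_leftInvOn hU hV hTV hST hT hS hx
  rw [eq_inv_of_mul_eq_one_right hmul, norm_inv]
  exact inv_anti₀ (norm_pos_iff.mpr (left_ne_zero_of_mul_eq_one hmul)) (hdet _ (hM _ (hTV hx)))

end DetBounds

theorem stmt_10_general (n : ℕ) (U V : Set (EuclideanSpace ℝ (Fin n)))
    (hU : IsOpen U) (hV : IsOpen V)
    (T S : EuclideanSpace ℝ (Fin n) → EuclideanSpace ℝ (Fin n))
    (hbij : Set.BijOn T U V) (hinv : Set.InvOn S T U V)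
    (hT : ContDiffOn ℝ 1 T U) (hS : ContDiffOn ℝ 1 S V)
    (MT : ℝ) (hMT : ∀ x ∈ U, ‖fderivWithin ℝ T U x‖ ≤ MT)
    (MS : ℝ) (hMS : ∀ y ∈ V, ‖fderivWithin ℝ S V y‖ ≤ MS) :
    (∃ c : ℝ, 0 < c ∧ ∀ x ∈ U, c ≤ |(fderivWithin ℝ T U x).det|) ∧
    (∃ c : ℝ, 0 < c ∧ ∀ y ∈ V, c ≤ |(fderivWithin ℝ S V y).det|) := by
  have hT' := hT.differentiableOn one_ne_zero
  have hS' := hS.differentiableOn one_ne_zero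
  exact ⟨exists_pos_le_norm_det_fderivWithin_of_leftInvOn hU hV hbij.mapsTo hinv.1 hT' hS' hMS,
    exists_pos_le_norm_det_fderivWithin_of_leftInvOn hV hU (hbij.symm hinv.symm).mapsTo hinv.2
      hS' hT' hMT⟩

/-- Let `U, V ⊆ ℝⁿ` be nonempty open sets and `T : U → V` bijective and
`1`-smooth (both `T` and `T⁻¹` are `C¹` with bounded first derivatives).  Then
`inf_U |det T′| > 0` and `inf_V |det (T⁻¹)′| > 0`. -/
theorem stmt_10 (n : ℕ) (U V : Set (EuclideanSpace ℝ (Fin n)))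
    (hU : IsOpen U) (hUne : U.Nonempty) (hV : IsOpen V) (hVne : V.Nonempty)
    (T S : EuclideanSpace ℝ (Fin n) → EuclideanSpace ℝ (Fin n))
    (hbij : Set.BijOn T U V) (hinv : Set.InvOn S T U V)
    (hT : ContDiffOn ℝ 1 T U) (hS : ContDiffOn ℝ 1 S V)
    (MT : ℝ) (hMT : ∀ x ∈ U, ‖fderivWithin ℝ T U x‖ ≤ MT)
    (MS : ℝ) (hMS : ∀ y ∈ V, ‖fderivWithin ℝ S V y‖ ≤ MS) :
    (∃ c : ℝ, 0 < c ∧ ∀ x ∈ U, c ≤ |(fderivWithin ℝ T U x).det|) ∧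
    (∃ c : ℝ, 0 < c ∧ ∀ y ∈ V, c ≤ |(fderivWithin ℝ S V y).det|) :=
  stmt_10_general n U V hU hV T S hbij hinv hT hS MT hMT MS hMS
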